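/- Let n, m ∈ ℕ, let a = (a_1, ..., a_n) : I → ℝ^n be an (m−1)-times continuously differentiable function, and let f : I → ℝ^n be a fundamental system of solutions of y^{(n)} = a_1 y^{(n-1)} + ... + a_n y. Define X_a := (a | e_1 | ... | e_{n-1}). Then for every d ∈ {0, ..., m−1} and j ∈ {0, ..., n−1}, one has on I: W_f^{(n+d, n−1, ..., j+1, j−1, ..., 1, 0)} = (−1)^{n−j−1} · W_f · ⟨ B_{d+1}(X_a, X_a', ..., X_a^{(d)}) e_1, e_{n−j} ⟩, where the multi-index (n+d, n−1, ..., j+1, j−1, ..., 1, 0) consists of n+d followed by the integers n−1 down to 0 with j omitted. -/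

import Mathlib

open Matrix

/-- Noncommutative complete Bell polynomials: `B_0 = I_n`,
`B_{m+1}(X_1,…,X_{m+1}) = ∑_{j=0}^m C(m,j) B_j(X_1,…,X_j) X_{m+1-j}`.
Here `X : Fin m → _` with `X i` playing the role of `X_{i+1}`. -/
noncomputable def Bell {n : ℕ} :
    (m : ℕ) → (Fin m → Matrix (Fin n) (Fin n) ℝ) → Matrix (Fin n) (Fin n) ℝ
  | 0, _ => 1
  | m + 1, X => ∑ j : Fin (m + 1),
      (Nat.choose m (j : ℕ) : ℝ) •
        (Bell (j : ℕ) (fun i : Fin (j : ℕ) => X (Fin.castLE (by omega) i)) *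
          X ⟨m - (j : ℕ), by omega⟩)

/-- Entrywise `k`-th derivative (within `I`) of a matrix-valued function. -/
noncomputable def matD {n : ℕ} (I : Set ℝ) (X : ℝ → Matrix (Fin n) (Fin n) ℝ) (k : ℕ)
    (x : ℝ) : Matrix (Fin n) (Fin n) ℝ :=
  Matrix.of fun p q => iteratedDerivWithin k (fun t => X t p q) I x

/-- `B_j(X, X', …, X^{(j-1)})` evaluated at `x` (derivatives within `I`). -/
noncomputable def BellD {n : ℕ} (I : Set ℝ) (X : ℝ → Matrix (Fin n) (Fin n) ℝ) (j : ℕ)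
    (x : ℝ) : Matrix (Fin n) (Fin n) ℝ :=
  Bell j (fun i : Fin j => matD I X (i : ℕ) x)

/-- Generalized Wronskian `W_f^k = det(f^{(k_1)} | … | f^{(k_n)})` (derivatives within `I`). -/
noncomputable def genW {n : ℕ} (I : Set ℝ) (f : ℝ → Fin n → ℝ) (k : Fin n → ℕ) (x : ℝ) : ℝ :=
  Matrix.det (Matrix.of fun p q => iteratedDerivWithin (k q) (fun t => f t p) I x)

/-- The multi-index `(n-1, n-2, …, 1, 0)` of the ordinary Wronskian. -/
def wIdx (n : ℕ) : Fin n → ℕ := fun q => n - 1 - (q : ℕ)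

/-- The multi-index `(n+d, n-1, …, j+1, j-1, …, 1, 0)`. -/
def dIdx (n d j : ℕ) : Fin n → ℕ :=
  fun q => if (q : ℕ) = 0 then n + d
    else if j < n - (q : ℕ) then n - (q : ℕ) else n - (q : ℕ) - 1

/-- `Φ_f^{[j]} = (-1)^{n-j-1} W_f^{(n,n-1,…,j+1,j-1,…,0)} / W_f`. -/
noncomputable def Phi {n : ℕ} (I : Set ℝ) (f : ℝ → Fin n → ℝ) (j : ℕ) (x : ℝ) : ℝ :=
  (-1 : ℝ) ^ (n - j - 1) * genW I f (dIdx n 0 j) x / genW I f (wIdx n) x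

/-- The `1`-indexed standard basis vector `e_i` of `ℝ^n`. -/
def stdB (n i : ℕ) : Fin n → ℝ := fun p => if (p : ℕ) + 1 = i then 1 else 0

/-- The matrix `X_a = (a | e_1 | … | e_{n-1})`. -/
def colMat {n : ℕ} (a : ℝ → Fin n → ℝ) (x : ℝ) : Matrix (Fin n) (Fin n) ℝ :=
  Matrix.of fun p q =>
    if (q : ℕ) = 0 then a x p else if (p : ℕ) + 1 = (q : ℕ) then 1 else 0

/-- The matrix `Y_f = (f^{(n-1)} | … | f' | f)` (derivatives within `I`). -/
noncomputable def Yfun {n : ℕ} (I : Set ℝ) (f : ℝ → Fin n → ℝ) (x : ℝ) :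
    Matrix (Fin n) (Fin n) ℝ :=
  Matrix.of fun p q => iteratedDerivWithin (n - 1 - (q : ℕ)) (fun t => f t p) I x

/-- The `1`-indexed component `a_i` of `a : I → ℝ^n`, with `a_i := 0` for `i > n`. -/
noncomputable def aExt {n : ℕ} (a : ℝ → Fin n → ℝ) (i : ℕ) : ℝ → ℝ :=
  fun t => if h : i - 1 < n then a t ⟨i - 1, h⟩ else 0

/-- `y` is an `n`-times differentiable (on `I`) solution of
`y^{(n)} = a_1 y^{(n-1)} + ⋯ + a_n y`, where `a i` is `a_{i+1}`. -/
def SolvesDE {n : ℕ} (I : Set ℝ) (a : ℝ → Fin n → ℝ) (y : ℝ → ℝ) : Prop :=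
  (∀ k < n, DifferentiableOn ℝ (iteratedDerivWithin k y I) I) ∧
    ∀ x ∈ I, iteratedDerivWithin n y I x =
      ∑ i : Fin n, a x i * iteratedDerivWithin (n - 1 - (i : ℕ)) y I x

/-- `f : I → ℝ^n` is a fundamental system of solutions of
`y^{(n)} = a_1 y^{(n-1)} + ⋯ + a_n y`: each component solves the equation and the
components are linearly independent functions on `I`. -/
def FundSystem {n : ℕ} (I : Set ℝ) (a : ℝ → Fin n → ℝ) (f : ℝ → Fin n → ℝ) : Prop :=
  (∀ p : Fin n, SolvesDE I a fun t => f t p) ∧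
    LinearIndependent ℝ fun p : Fin n => I.restrict fun t => f t p

/-! Put `Y = (f^{(n-1)} | … | f' | f)`. The differential equation says exactly `Y' = Y X_a`, and
differentiating `(Y X_a)^{(k)}` with the Leibniz rule reproduces the recursion of the Bell
polynomials, so `Y^{(k)} = Y B_k(X_a, …, X_a^{(k-1)})`. Hence the first column `f^{(n+d)}` of the
generalized Wronskian is `Y B_{d+1} e_1`, a combination of the columns of `Y`; all of them except
`f^{(j)}` already occur among the remaining columns, so by multilinearity only the coefficient
`⟨B_{d+1} e_1, e_{n-j}⟩` of `f^{(j)}` survives, and moving that column back into place is a cycle of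
sign `(-1)^{n-j-1}`. -/

section IteratedDerivWithin

variable {𝕜 : Type*} [NontriviallyNormedField 𝕜] {F : Type*} [NormedAddCommGroup F]
  [NormedSpace 𝕜 F] {s : Set 𝕜} {f : 𝕜 → F}

theorem iteratedDerivWithin_iteratedDerivWithin (i j : ℕ) :
    iteratedDerivWithin i (iteratedDerivWithin j f s) s = iteratedDerivWithin (j + i) f s := by
  have hj : iteratedDerivWithin j f s = (fun g : 𝕜 → F => derivWithin g s)^[j] f :=
    funext fun _ => iteratedDerivWithin_eq_iterate
  funext x
  rw [iteratedDerivWithin_eq_iterate, iteratedDerivWithin_eq_iterate, hj, add_comm,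
    Function.iterate_add_apply]

theorem ContDiffOn.iteratedDerivWithin_of_add {k r : ℕ} (hf : ContDiffOn 𝕜 (k + r : ℕ) f s)
    (hs : UniqueDiffOn 𝕜 s) : ContDiffOn 𝕜 r (iteratedDerivWithin k f s) s := by
  induction k generalizing f with
  | zero => simpa using hf
  | succ k ih =>
    rw [iteratedDerivWithin_succ']
    exact ih (hf.derivWithin hs (by push_cast; rw [add_right_comm]))

theorem contDiffOn_add_of_iteratedDerivWithin {k r : ℕ} (hs : UniqueDiffOn 𝕜 s)
    (hf : ContDiffOn 𝕜 k f s) (hd : ContDiffOn 𝕜 r (iteratedDerivWithin k f s) s) :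
    ContDiffOn 𝕜 (k + r : ℕ) f s := by
  induction r with
  | zero => simpa using hf
  | succ r ih =>
    rw [← add_assoc, contDiffOn_nat_succ_iff_contDiffOn_one_iteratedDerivWithin hs,
      ← iteratedDerivWithin_iteratedDerivWithin]
    exact ⟨ih (hd.of_le (by norm_cast; omega)), hd.iteratedDerivWithin_of_add hs⟩

end IteratedDerivWithin

section SolvesDE

variable {n : ℕ} {s : Set ℝ} {a : ℝ → Fin n → ℝ} {y : ℝ → ℝ}

theorem SolvesDE.contDiffOn_order (hs : UniqueDiffOn ℝ s)
    (ha : ∀ i, ContinuousOn (fun t => a t i) s) (hy : SolvesDE s a y) : ContDiffOn ℝ n y s := by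
  refine (contDiffOn_nat_iff_continuousOn_differentiableOn_deriv hs).2 ⟨fun k hk => ?_, hy.1⟩
  rcases hk.lt_or_eq with hk | rfl
  · exact (hy.1 k hk).continuousOn
  · refine ContinuousOn.congr ?_ hy.2
    exact continuousOn_finsetSum _ fun i _ =>
      (ha i).mul (hy.1 _ (by omega)).continuousOn

theorem SolvesDE.contDiffOn {k : ℕ} (hs : UniqueDiffOn ℝ s)
    (ha : ∀ i, ContDiffOn ℝ k (fun t => a t i) s) (hy : SolvesDE s a y) :
    ContDiffOn ℝ (n + k : ℕ) y s := by
  suffices ∀ r ≤ k, ContDiffOn ℝ (n + r : ℕ) y s from this k le_rfl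
  intro r hr
  induction r with
  | zero => exact hy.contDiffOn_order hs fun i => (ha i).continuousOn
  | succ r ih =>
    have hy_r := ih (by omega)
    refine contDiffOn_add_of_iteratedDerivWithin hs (hy_r.of_le (by norm_cast; omega))
      (ContDiffOn.congr ?_ hy.2)
    refine ContDiffOn.sum fun i _ => ((ha i).of_le (by norm_cast)).mul ?_
    exact (hy_r.of_le (by norm_cast; omega)).iteratedDerivWithin_of_add hs

end SolvesDE

section MatrixDerivatives

variable {n : ℕ} {s : Set ℝ} {x : ℝ}

theorem matD_zero (X : ℝ → Matrix (Fin n) (Fin n) ℝ) : matD s X 0 x = X x := by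
  ext p q
  simp [matD]

theorem matD_succ_of_eqOn {X Z : ℝ → Matrix (Fin n) (Fin n) ℝ} (hx : x ∈ s)
    (hXZ : ∀ t ∈ s, matD s X 1 t = Z t) (k : ℕ) : matD s X (k + 1) x = matD s Z k x := by
  ext p q
  refine (congrFun iteratedDerivWithin_succ' x).trans (iteratedDerivWithin_congr ?_ hx)
  intro t ht
  simpa [matD] using congrFun (congrFun (hXZ t ht) p) q

theorem matD_mul {X Z : ℝ → Matrix (Fin n) (Fin n) ℝ} {k : ℕ} (hs : UniqueDiffOn ℝ s)
    (hx : x ∈ s) (hX : ∀ p q, ContDiffOn ℝ k (fun t => X t p q) s)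
    (hZ : ∀ p q, ContDiffOn ℝ k (fun t => Z t p q) s) :
    matD s (fun t => X t * Z t) k x =
      ∑ i ∈ Finset.range (k + 1), (k.choose i : ℝ) • (matD s X i x * matD s Z (k - i) x) := by
  ext p q
  simp only [matD, Matrix.mul_apply, Matrix.of_apply, Matrix.sum_apply, Matrix.smul_apply,
    smul_eq_mul, Finset.mul_sum]
  rw [iteratedDerivWithin_fun_sum hx hs fun l _ => ((hX p l).mul (hZ l q)).contDiffWithinAt hx,
    Finset.sum_comm]
  refine Finset.sum_congr rfl fun l _ => ?_
  refine (iteratedDerivWithin_mul (f := fun t => X t p l) (g := fun t => Z t l q) hx hs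
    ((hX p l).contDiffWithinAt hx) ((hZ l q).contDiffWithinAt hx)).trans ?_
  exact Finset.sum_congr rfl fun i _ => by ring

theorem BellD_zero (X : ℝ → Matrix (Fin n) (Fin n) ℝ) : BellD s X 0 x = 1 := by
  simp [BellD, Bell]

theorem BellD_succ (X : ℝ → Matrix (Fin n) (Fin n) ℝ) (k : ℕ) :
    BellD s X (k + 1) x = ∑ i ∈ Finset.range (k + 1),
      (k.choose i : ℝ) • (BellD s X i x * matD s X (k - i) x) := by
  rw [← Fin.sum_univ_eq_sum_range
    (fun i => (k.choose i : ℝ) • (BellD s X i x * matD s X (k - i) x))]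
  unfold BellD
  rw [Bell]
  rfl

theorem matD_eq_mul_BellD {Y X : ℝ → Matrix (Fin n) (Fin n) ℝ} {K : ℕ} (hs : UniqueDiffOn ℝ s)
    (hY : ∀ p q, ContDiffOn ℝ K (fun t => Y t p q) s)
    (hX : ∀ p q, ContDiffOn ℝ K (fun t => X t p q) s)
    (hYX : ∀ t ∈ s, matD s Y 1 t = Y t * X t) :
    ∀ k ≤ K + 1, ∀ x ∈ s, matD s Y k x = Y x * BellD s X k x := by
  intro k
  induction k using Nat.strong_induction_on with
  | _ k ih =>
    intro hk x hx
    rcases k with _ | k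
    · rw [matD_zero, BellD_zero, Matrix.mul_one]
    have hkK : (k : WithTop ℕ∞) ≤ K := by norm_cast; omega
    rw [matD_succ_of_eqOn hx hYX, matD_mul hs hx (fun p q => (hY p q).of_le hkK)
      (fun p q => (hX p q).of_le hkK), BellD_succ, Finset.mul_sum]
    refine Finset.sum_congr rfl fun i hi => ?_
    rw [ih i (by simp at hi; omega) (by simp at hi; omega) x hx, Matrix.mul_smul, Matrix.mul_assoc]

end MatrixDerivatives

section Wronskian

variable {n : ℕ} {s : Set ℝ} {f : ℝ → Fin n → ℝ}

theorem matD_Yfun_apply (x : ℝ) (k : ℕ) (p q : Fin n) :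
    matD s (Yfun s f) k x p q = iteratedDerivWithin (wIdx n q + k) (fun t => f t p) s x := by
  change iteratedDerivWithin k (iteratedDerivWithin (wIdx n q) (fun t => f t p) s) s x = _
  rw [iteratedDerivWithin_iteratedDerivWithin]

theorem Yfun_contDiffOn {k : ℕ} (hs : UniqueDiffOn ℝ s)
    (hf : ∀ p, ContDiffOn ℝ (n + k : ℕ) (fun t => f t p) s) (p q : Fin n) :
    ContDiffOn ℝ k (fun t => Yfun s f t p q) s :=
  ((hf p).of_le (by norm_cast; omega)).iteratedDerivWithin_of_add hs

theorem colMat_contDiffOn {k : ℕ} {a : ℝ → Fin n → ℝ}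
    (ha : ∀ i, ContDiffOn ℝ k (fun t => a t i) s) (p q : Fin n) :
    ContDiffOn ℝ k (fun t => colMat a t p q) s := by
  by_cases hq : (q : ℕ) = 0 <;> simp [colMat, hq, ha p, contDiffOn_const]

theorem matD_Yfun_one {a : ℝ → Fin n → ℝ} (hf : ∀ p, SolvesDE s a fun t => f t p) {t : ℝ}
    (ht : t ∈ s) : matD s (Yfun s f) 1 t = Yfun s f t * colMat a t := by
  ext p q
  rw [matD_Yfun_apply, Matrix.mul_apply]
  by_cases hq : (q : ℕ) = 0
  · rw [show wIdx n q + 1 = n by simp [wIdx]; omega, (hf p).2 t ht]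
    simp [Yfun, colMat, hq, mul_comm]
  · rw [Finset.sum_eq_single ⟨q - 1, by omega⟩]
    · simp only [Yfun, colMat, wIdx, Matrix.of_apply, hq, if_false]
      rw [if_pos (by omega), mul_one, show n - 1 - q + 1 = n - 1 - (q - 1) by omega]
    · intro l _ hl
      have hlq : (l : ℕ) + 1 ≠ q := fun h => hl (Fin.ext (by simp; omega))
      simp [colMat, hq, hlq]
    · simp

theorem matD_Yfun_eq_mul_BellD {k : ℕ} {a : ℝ → Fin n → ℝ}
    (hs : UniqueDiffOn ℝ s) (ha : ∀ i, ContDiffOn ℝ k (fun t => a t i) s)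
    (hf : ∀ p, SolvesDE s a fun t => f t p) :
    ∀ d ≤ k + 1, ∀ x ∈ s, matD s (Yfun s f) d x = Yfun s f x * BellD s (colMat a) d x :=
  matD_eq_mul_BellD hs (Yfun_contDiffOn hs fun p => (hf p).contDiffOn hs ha)
    (colMat_contDiffOn ha) fun _ => matD_Yfun_one hf

end Wronskian

theorem Matrix.det_updateCol_mulVec_submatrix {R ι : Type*} [CommRing R] [Fintype ι]
    [DecidableEq ι] (A : Matrix ι ι R) (σ : Equiv.Perm ι) (i : ι) (v : ι → R) :
    ((A.submatrix id σ).updateCol i (A *ᵥ v)).det = Equiv.Perm.sign σ * v (σ i) * A.det := by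
  have hv : A *ᵥ v = fun k => ∑ l, v (σ l) • A.submatrix id σ k l := by
    ext k
    simp only [Matrix.mulVec, dotProduct, Matrix.submatrix_apply, id, smul_eq_mul]
    rw [← Equiv.sum_comp σ]
    simp only [mul_comm]
  rw [hv, Matrix.det_updateCol_sum, Matrix.det_permute', smul_eq_mul]
  ring

theorem dIdx_eq_wIdx_cycleRange_symm {n d j : ℕ} (hj : j < n) {q : Fin n} (hq : (q : ℕ) ≠ 0) :
    dIdx n d j q = wIdx n ((Fin.cycleRange ⟨n - 1 - j, by omega⟩).symm q) := by
  obtain ⟨n, rfl⟩ : ∃ n', n = n' + 1 := ⟨n - 1, by omega⟩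
  obtain ⟨q, rfl⟩ := Fin.exists_succ_eq.2 (Fin.ext_iff.not.2 hq)
  rw [Fin.cycleRange_symm_succ]
  simp only [dIdx, wIdx, Fin.succAbove, Fin.lt_def]
  split_ifs <;> simp_all <;> omega

theorem stdB_succ {n : ℕ} (i : Fin n) : stdB n (i + 1) = Pi.single i 1 := by
  ext p
  simp [stdB, Pi.single_apply, Fin.ext_iff]

theorem stmt_6_general (n m : ℕ) (I : Set ℝ) (hIo : IsOpen I)
    (a f : ℝ → Fin n → ℝ)
    (ha : ∀ i : Fin n, ContDiffOn ℝ ((m - 1 : ℕ) : ℕ∞) (fun t => a t i) I)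
    (hf : FundSystem I a f) :
    ∀ d < m, ∀ j < n, ∀ x ∈ I,
      genW I f (dIdx n d j) x =
        (-1 : ℝ) ^ (n - j - 1) * genW I f (wIdx n) x *
          ((BellD I (colMat a) (d + 1) x).mulVec (stdB n 1) ⬝ᵥ stdB n (n - j)) := by
  intro d hd j hj x hx
  have : NeZero n := ⟨by omega⟩
  set Y := Yfun I f x
  set B := BellD I (colMat a) (d + 1) x
  set r : Fin n := ⟨n - 1 - j, by omega⟩
  have hYB : matD I (Yfun I f) (d + 1) x = Y * B :=
    matD_Yfun_eq_mul_BellD hIo.uniqueDiffOn ha hf.1 (d + 1) (by omega) x hx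
  have hcols : Matrix.of (fun p q => iteratedDerivWithin (dIdx n d j q) (fun t => f t p) I x) =
      (Y.submatrix id r.cycleRange.symm).updateCol 0 (Y *ᵥ fun i => B i 0) := by
    ext p q
    rcases eq_or_ne q 0 with rfl | hq
    · rw [Matrix.updateCol_self, Matrix.of_apply, show dIdx n d j 0 = wIdx n 0 + (d + 1) by
        simp [dIdx, wIdx]; omega, ← matD_Yfun_apply, hYB]
      rfl
    · rw [Matrix.updateCol_ne hq, Matrix.of_apply,
        dIdx_eq_wIdx_cycleRange_symm hj (Fin.val_ne_iff.2 hq)]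
      rfl
  have hB : B *ᵥ stdB n 1 ⬝ᵥ stdB n (n - j) = B r 0 := by
    have he₁ : stdB n 1 = Pi.single 0 1 := by simpa using stdB_succ (0 : Fin n)
    rw [he₁, show n - j = r + 1 by simp [r]; omega, stdB_succ, Matrix.mulVec_single_one,
      dotProduct_single_one]
    rfl
  rw [genW, hcols, Matrix.det_updateCol_mulVec_submatrix, Fin.cycleRange_symm_zero,
    Equiv.Perm.sign_symm, Fin.sign_cycleRange, hB, show n - j - 1 = r by simp [r]; omega]
  have hW : genW I f (wIdx n) x = Y.det := rfl
  push_cast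
  rw [hW]
  ring

/-- for a fundamental system `f`, for `0 ≤ d ≤ m-1` and `0 ≤ j ≤ n-1`,
`W_f^{(n+d,n-1,…,j+1,j-1,…,0)} = (-1)^{n-j-1} W_f ⟨B_{d+1}(X_a,…,X_a^{(d)}) e_1, e_{n-j}⟩`
on `I`. -/
theorem stmt_6 (n m : ℕ) (hn : 0 < n) (hm : 0 < m) (I : Set ℝ) (hIo : IsOpen I)
    (hIne : I.Nonempty) (hIc : I.OrdConnected) (a f : ℝ → Fin n → ℝ)
    (ha : ∀ i : Fin n, ContDiffOn ℝ ((m - 1 : ℕ) : ℕ∞) (fun t => a t i) I)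
    (hf : FundSystem I a f) :
    ∀ d < m, ∀ j < n, ∀ x ∈ I,
      genW I f (dIdx n d j) x =
        (-1 : ℝ) ^ (n - j - 1) * genW I f (wIdx n) x *
          ((BellD I (colMat a) (d + 1) x).mulVec (stdB n 1) ⬝ᵥ stdB n (n - j)) :=
  stmt_6_general n m I hIo a f ha hf
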